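/- arXiv:0912.4646 — 3 statements merged into one kernel-verified Lean document; each statement's English description precedes it below -/
import Mathlib

section
/- For every real x ≥ 2, the series f(x) = ∑_{k=1}^{∞} μ(k) ν(x/k) (which is a finite sum, since ν(x/k) = 0 for k > x) satisfies f(x) = −1. -/
noncomputable def nu (t : ℝ) : ℝ := Int.fract (t/2) + 1/2 - Int.fract (t/2 + 1/2)

noncomputable def f (x : ℝ) : ℝ :=
  ∑ k ∈ Finset.Icc 1 ⌊x⌋₊, (ArithmeticFunction.moebius k : ℝ) * nu (x / k)

/-!
Writing `Int.fract u = u - ⌊u⌋` and using Hermite's identity `⌊s⌋ + ⌊s + 1/2⌋ = ⌊2s⌋` gives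
`ν(t) = ⌊t⌋ - 2⌊t/2⌋`. Since `μ * ζ = 1`, `∑_{k ≤ y} μ(k) ⌊y/k⌋ = ∑_{n ≤ y} (μ * ζ)(n) = 1`
for every `y ≥ 1`; applied to `y = x` and `y = x/2` this gives `f(x) = 1 - 2`.
-/

open Finset ArithmeticFunction
open scoped ArithmeticFunction.Moebius

theorem Int.floor_add_floor_add_half {K : Type*} [Field K] [LinearOrder K]
    [IsStrictOrderedRing K] [FloorRing K] (s : K) :
    ⌊s⌋ + ⌊s + 1 / 2⌋ = ⌊2 * s⌋ := by
  have hle := Int.floor_le s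
  have hlt := Int.lt_floor_add_one s
  rcases lt_or_ge (s - ⌊s⌋) (1 / 2) with h | h
  · have e1 : ⌊s + 1 / 2⌋ = ⌊s⌋ := Int.floor_eq_iff.2 ⟨by linarith, by linarith⟩
    have e2 : ⌊2 * s⌋ = 2 * ⌊s⌋ :=
      Int.floor_eq_iff.2 ⟨by push_cast; linarith, by push_cast; linarith⟩
    omega
  · have e1 : ⌊s + 1 / 2⌋ = ⌊s⌋ + 1 :=
      Int.floor_eq_iff.2 ⟨by push_cast; linarith, by push_cast; linarith⟩
    have e2 : ⌊2 * s⌋ = 2 * ⌊s⌋ + 1 :=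
      Int.floor_eq_iff.2 ⟨by push_cast; linarith, by push_cast; linarith⟩
    omega

theorem nu_eq_floor_sub_two_mul_floor_half (t : ℝ) : nu t = ⌊t⌋ - 2 * ⌊t / 2⌋ := by
  have hermite := Int.floor_add_floor_add_half (t / 2)
  rw [mul_div_cancel₀ t two_ne_zero] at hermite
  rw [nu, Int.fract, Int.fract, ← hermite]
  push_cast
  ring

theorem sum_Icc_moebius_mul_div {R : Type*} [Ring R] {N : ℕ} (hN : 0 < N) :
    ∑ k ∈ Icc 1 N, (μ k : R) * (N / k : ℕ) = 1 := by
  have h := sum_Ioc_mul_zeta_eq_sum (μ : ArithmeticFunction R) N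
  simp only [intCoe_apply] at h
  rw [show Icc 1 N = Ioc 0 N from Icc_add_one_left_eq_Ioc 0 N, ← h, coe_moebius_mul_coe_zeta]
  simp [one_apply, hN.ne']

theorem sum_Icc_moebius_mul_floor_div {y : ℝ} (hy : 1 ≤ y) {N : ℕ} (hN : ⌊y⌋₊ ≤ N) :
    ∑ k ∈ Icc 1 N, (μ k : ℝ) * ⌊y / k⌋ = 1 := by
  have hfloor (k : ℕ) : (⌊y / k⌋ : ℝ) = (⌊y⌋₊ / k : ℕ) := by
    rw [← Nat.floor_div_natCast, ← Int.natCast_floor_eq_floor (by positivity)]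
    norm_cast
  simp_rw [hfloor]
  rw [← sum_subset (Icc_subset_Icc_right hN)]
  · exact sum_Icc_moebius_mul_div (Nat.floor_pos.2 hy)
  · intro k hkN hky
    have hyk : ⌊y⌋₊ < k := by
      simp only [mem_Icc] at hkN hky
      omega
    simp [Nat.div_eq_of_lt hyk]

theorem stmt7 : ∀ x : ℝ, 2 ≤ x → f x = -1 := by
  intro x hx
  have hterm : ∀ k ∈ Icc 1 ⌊x⌋₊, (μ k : ℝ) * nu (x / k)
      = μ k * ⌊x / k⌋ - 2 * (μ k * ⌊x / 2 / k⌋) := by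
    intro k _
    rw [nu_eq_floor_sub_two_mul_floor_half, div_right_comm]
    ring
  rw [f, sum_congr rfl hterm, sum_sub_distrib, ← mul_sum,
    sum_Icc_moebius_mul_floor_div (by linarith) le_rfl,
    sum_Icc_moebius_mul_floor_div (by linarith) (Nat.floor_le_floor (by linarith))]
  norm_num
end

section
/- For every complex s with Re(s) > 1, ∫_{0}^{1} f(1/x) · x^{s-1} dx = (1 − 2^{1−s}) / s, where f(x) = ∑_{k≥1} μ(k) ν(x/k). -/
open MeasureTheory

/-!
For `t ≥ 0`, `nu t` is the parity of `⌊t⌋`, and `n % 2 = n - 2 * (n / 2)`. Combined with the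
Möbius identity `∑_{k ≤ N} μ(k) ⌊N / k⌋ = 1` (valid for `N ≥ 1`), this gives `f = 1` on `[1, 2)`
and `f = -1` on `[2, ∞)`. The integral therefore splits at `1/2` into two power integrals:
`-(1/2)^s / s + (1 - (1/2)^s) / s = (1 - 2^(1-s)) / s`.
-/

open Finset ArithmeticFunction intervalIntegral
open scoped ArithmeticFunction.Moebius

theorem ArithmeticFunction.sum_Ioc_moebius_mul_div {R : Type*} [Ring R] {N : ℕ} (hN : 0 < N) :
    ∑ n ∈ Ioc 0 N, (μ n : R) * (N / n : ℕ) = 1 := by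
  have h := sum_Ioc_mul_zeta_eq_sum (μ : ArithmeticFunction R) N
  rw [coe_moebius_mul_coe_zeta] at h
  simp only [intCoe_apply] at h
  rw [← h, sum_eq_single_of_mem 1 (Finset.mem_Ioc.2 ⟨one_pos, hN⟩) (fun n _ hn => by simp [hn]), one_one]

theorem ArithmeticFunction.sum_Ioc_moebius_mul_div_mod_two {R : Type*} [Ring R] {N : ℕ}
    (hN : 2 ≤ N) : ∑ n ∈ Ioc 0 N, (μ n : R) * (N / n % 2 : ℕ) = -1 := by
  have hmod (n : ℕ) : ((N / n % 2 : ℕ) : R) = (N / n : ℕ) - (N / 2 / n : ℕ) * 2 := by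
    rw [eq_sub_iff_add_eq, Nat.div_div_eq_div_mul, mul_comm 2 n, ← Nat.div_div_eq_div_mul]
    norm_cast
    exact congrArg Nat.cast (Nat.mod_add_div' (N / n) 2)
  have hhalf : ∑ n ∈ Ioc 0 N, (μ n : R) * (N / 2 / n : ℕ) = 1 := by
    rw [← sum_Ioc_moebius_mul_div (R := R) (N := N / 2) (by omega)]
    refine (sum_subset (Ioc_subset_Ioc_right (Nat.div_le_self N 2)) fun n hn hn' => ?_).symm
    simp only [Finset.mem_Ioc, not_and, not_le] at hn hn'
    simp [Nat.div_eq_of_lt (hn' hn.1)]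
  simp only [hmod, mul_sub, ← mul_assoc, sum_sub_distrib, ← sum_mul, hhalf,
    sum_Ioc_moebius_mul_div (R := R) (by omega : 0 < N)]
  norm_num

theorem nu_eq_floor_mod_two {t : ℝ} (ht : 0 ≤ t) : nu t = (⌊t⌋₊ % 2 : ℕ) := by
  have h : nu t = ⌊(t + 1) / 2⌋ - ⌊t / 2⌋ := by
    simp only [nu, Int.fract]
    ring_nf
  rw [h, ← Int.natCast_floor_eq_floor (by positivity),
      ← Int.natCast_floor_eq_floor (by positivity), Nat.floor_div_ofNat, Nat.floor_div_ofNat,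
      Nat.floor_add_one ht]
  have hdiv : (⌊t⌋₊ + 1) / 2 = ⌊t⌋₊ % 2 + ⌊t⌋₊ / 2 := by omega
  simp only [hdiv, Nat.cast_add, Int.cast_add, Int.cast_natCast]
  ring

theorem f_eq_sum_moebius_mul_floor_div_mod_two {x : ℝ} (hx : 0 ≤ x) :
    f x = ∑ k ∈ Ioc 0 ⌊x⌋₊, (μ k : ℝ) * (⌊x⌋₊ / k % 2 : ℕ) := by
  rw [f, ← Finset.Icc_add_one_left_eq_Ioc]
  refine sum_congr rfl fun k _ => ?_
  rw [nu_eq_floor_mod_two (by positivity), Nat.floor_div_natCast]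

theorem f_eq_one_of_mem_Ico {x : ℝ} (hx : x ∈ Set.Ico 1 2) : f x = 1 := by
  have hfloor : ⌊x⌋₊ = 1 := (Nat.floor_eq_iff (by linarith [hx.1])).2 (by norm_num; exact hx)
  rw [f_eq_sum_moebius_mul_floor_div_mod_two (by linarith [hx.1]), hfloor]
  simp

theorem f_eq_neg_one_of_two_le {x : ℝ} (hx : 2 ≤ x) : f x = -1 := by
  rw [f_eq_sum_moebius_mul_floor_div_mod_two (by linarith),
    sum_Ioc_moebius_mul_div_mod_two (Nat.le_floor (by exact_mod_cast hx))]

theorem intervalIntegral.integral_eq_add_of_eqOn_Ioc {E : Type*} [NormedAddCommGroup E]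
    [NormedSpace ℝ E] {a b c : ℝ} {g g₁ g₂ : ℝ → E} (hab : a ≤ b) (hbc : b ≤ c)
    (h₁ : Set.EqOn g g₁ (Set.Ioc a b)) (h₂ : Set.EqOn g g₂ (Set.Ioc b c))
    (hg₁ : IntervalIntegrable g₁ volume a b) (hg₂ : IntervalIntegrable g₂ volume b c) :
    ∫ x in a..c, g x = (∫ x in a..b, g₁ x) + ∫ x in b..c, g₂ x := by
  have ae_eq {u v : ℝ} {h : ℝ → E} (huv : u ≤ v) (hh : Set.EqOn g h (Set.Ioc u v)) :
      g =ᵐ[volume.restrict (Set.uIoc u v)] h := by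
    rw [Set.uIoc_of_le huv]
    exact (ae_restrict_mem measurableSet_Ioc).mono hh
  rw [← integral_add_adjacent_intervals (hg₁.congr_ae (ae_eq hab h₁).symm)
      (hg₂.congr_ae (ae_eq hbc h₂).symm), integral_congr_ae_restrict (ae_eq hab h₁),
    integral_congr_ae_restrict (ae_eq hbc h₂)]

theorem Complex.two_cpow_one_sub (s : ℂ) : (2 : ℂ) ^ (1 - s) = 2 * (1 / 2 : ℂ) ^ s := by
  rw [one_div, inv_cpow _ _ (by rw [ofNat_arg]; exact Real.pi_ne_zero.symm), sub_eq_add_neg,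
    cpow_add _ _ two_ne_zero, cpow_one, cpow_neg]

theorem f_one_div_of_mem_Ioc_zero_half {x : ℝ} (hx : x ∈ Set.Ioc 0 (1 / 2)) : f (1 / x) = -1 :=
  f_eq_neg_one_of_two_le ((le_div_iff₀ hx.1).2 (by linarith [hx.2]))

theorem f_one_div_of_mem_Ioc_half_one {x : ℝ} (hx : x ∈ Set.Ioc (1 / 2) 1) : f (1 / x) = 1 := by
  have hx0 : 0 < x := by linarith [hx.1]
  exact f_eq_one_of_mem_Ico
    ⟨(le_div_iff₀ hx0).2 (by linarith [hx.2]), (div_lt_iff₀ hx0).2 (by linarith [hx.1])⟩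

theorem stmt10 : ∀ s : ℂ, 1 < s.re →
    ∫ x in (0:ℝ)..1, (f (1/x) : ℂ) * (x:ℂ)^(s - 1) = (1 - 2^(1 - s)) / s := by
  intro s hs
  have hre : -1 < (s - 1).re := by rw [Complex.sub_re, Complex.one_re]; linarith
  have hlow : Set.EqOn (fun x : ℝ => (f (1/x) : ℂ) * (x:ℂ)^(s - 1))
      (fun x => -(x : ℂ) ^ (s - 1)) (Set.Ioc 0 (1 / 2)) := fun x hx => by
    simp only [f_one_div_of_mem_Ioc_zero_half hx, Complex.ofReal_neg, Complex.ofReal_one,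
      neg_one_mul]
  have hhigh : Set.EqOn (fun x : ℝ => (f (1/x) : ℂ) * (x:ℂ)^(s - 1))
      (fun x => (x : ℂ) ^ (s - 1)) (Set.Ioc (1 / 2) 1) := fun x hx => by
    simp only [f_one_div_of_mem_Ioc_half_one hx, Complex.ofReal_one, one_mul]
  rw [integral_eq_add_of_eqOn_Ioc (by norm_num) (by norm_num) hlow hhigh
      (intervalIntegrable_cpow' hre).neg (intervalIntegrable_cpow' hre),
    intervalIntegral.integral_neg, integral_cpow (Or.inl hre), integral_cpow (Or.inl hre),
    sub_add_cancel, Complex.two_cpow_one_sub]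
  push_cast
  rw [Complex.zero_cpow (Complex.ne_zero_of_re_pos (by linarith)), Complex.one_cpow]
  ring
end

section
/- If ∑_{k=1}^{∞} μ(k)/k^s converges for every complex s with Re(s) > 1/2, then the Riemann zeta function has no zeros with Re(s) > 1/2. -/
/-!
For `σ₀ > 1/2` the partial sums of `∑ μ(k) k^{-σ₀}` converge, hence are bounded, and partial
summation against them rewrites `∑ μ(k) k^{-s}` for `Re s > σ₀` as a series whose `k`-th term is
`O(k^{-(Re s - σ₀) - 1})`, locally uniformly in `s`. So the limit `F` of the Dirichlet series is
holomorphic on `Re s > 1/2`. Since `F ζ = 1` on `Re s > 1`, the identity theorem applied to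
`F(s) (s - 1) ζ(s)` and `s - 1` gives `F ζ = 1` on all of `Re s > 1/2` away from the pole, so `ζ`
has no zeros there.
-/

open Filter Topology Finset Complex

theorem sum_Icc_one_mul_eq_sub_sum_range {R : Type*} [CommRing R] (c b : ℕ → R) (n : ℕ) :
    ∑ k ∈ Icc 1 n, c k * b k =
      (∑ k ∈ Icc 1 n, c k) * b n - ∑ k ∈ range n, (∑ j ∈ Icc 1 k, c j) * (b (k + 1) - b k) := by
  induction n with
  | zero => simp
  | succ n ih =>
    rw [sum_Icc_succ_top (by omega), sum_Icc_succ_top (by omega), sum_range_succ, ih]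
    ring

theorem norm_ofReal_add_one_cpow_neg_sub_le {x : ℝ} (hx : 1 ≤ x) {w : ℂ} {σ : ℝ}
    (hσ : -1 ≤ σ) (hσw : σ ≤ w.re) :
    ‖((x + 1 : ℝ) : ℂ) ^ (-w) - (x : ℂ) ^ (-w)‖ ≤ ‖w‖ * x ^ (-σ - 1) := by
  rcases eq_or_ne w 0 with rfl | hw0
  · simp
  have hx0 : 0 < x := by linarith
  have hderiv : ∀ y ∈ Set.Icc x (x + 1), HasDerivWithinAt (fun y : ℝ => (y : ℂ) ^ (-w))
      (-w * (y : ℂ) ^ (-w - 1)) (Set.Icc x (x + 1)) y := fun y hy =>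
    (hasDerivAt_ofReal_cpow_const (hx0.trans_le hy.1).ne' (neg_ne_zero.2 hw0)).hasDerivWithinAt
  have hbound : ∀ y ∈ Set.Ico x (x + 1), ‖-w * (y : ℂ) ^ (-w - 1)‖ ≤ ‖w‖ * x ^ (-σ - 1) := by
    intro y hy
    rw [norm_mul, norm_neg, norm_cpow_eq_rpow_re_of_pos (hx0.trans_le hy.1), sub_re, neg_re, one_re]
    gcongr ‖w‖ * ?_
    calc y ^ (-w.re - 1) ≤ x ^ (-w.re - 1) := Real.rpow_le_rpow_of_nonpos hx0 hy.1 (by linarith)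
      _ ≤ x ^ (-σ - 1) := Real.rpow_le_rpow_of_exponent_le hx (by linarith)
  simpa using norm_image_sub_le_of_norm_deriv_le_segment' hderiv hbound (x + 1) (by simp)

noncomputable def abelTerm (c : ℕ → ℂ) (w : ℂ) (k : ℕ) : ℂ :=
  (∑ j ∈ Icc 1 k, c j) * (((k + 1 : ℕ) : ℂ) ^ (-w) - (k : ℂ) ^ (-w))

section AbelSummation

variable {c : ℕ → ℂ} {B : ℝ}

theorem norm_abelTerm_le (hB : ∀ n, ‖∑ k ∈ Icc 1 n, c k‖ ≤ B) (k : ℕ) {w : ℂ} {σ : ℝ}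
    (hσ : 0 ≤ σ) (hσw : σ ≤ w.re) :
    ‖abelTerm c w k‖ ≤ B * ‖w‖ * (k : ℝ) ^ (-σ - 1) := by
  have hB0 : 0 ≤ B := (norm_nonneg _).trans (hB 0)
  rcases Nat.eq_zero_or_pos k with rfl | hk
  · rw [abelTerm, Icc_eq_empty (by omega), sum_empty, zero_mul, norm_zero]
    positivity
  have hdiff := norm_ofReal_add_one_cpow_neg_sub_le (Nat.one_le_cast.2 hk) (by linarith) hσw
  push_cast at hdiff
  rw [abelTerm, norm_mul, mul_assoc]
  exact mul_le_mul (hB k) (by exact_mod_cast hdiff) (norm_nonneg _) hB0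

theorem differentiableOn_tsum_abelTerm (hB : ∀ n, ‖∑ k ∈ Icc 1 n, c k‖ ≤ B) :
    DifferentiableOn ℂ (fun w => ∑' k, abelTerm c w k) {w | 0 < w.re} := by
  intro w₀ (hw₀ : 0 < w₀.re)
  set V : Set ℂ := {w | w₀.re / 2 < w.re ∧ ‖w‖ < ‖w₀‖ + 1}
  have hV : IsOpen V :=
    (isOpen_lt continuous_const continuous_re).inter (isOpen_lt continuous_norm continuous_const)
  have hw₀V : w₀ ∈ V := ⟨by linarith, by linarith⟩
  have hdiff : ∀ k, DifferentiableOn ℂ (fun w => abelTerm c w k) V := by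
    intro k
    rcases Nat.eq_zero_or_pos k with rfl | hk
    · simp [abelTerm, differentiableOn_const]
    refine (((differentiable_neg.const_cpow (Or.inl ?_)).sub
      (differentiable_neg.const_cpow (Or.inl ?_))).const_mul _).differentiableOn <;>
      exact Nat.cast_ne_zero.2 (by omega)
  have hle : ∀ k, ∀ w ∈ V,
      ‖abelTerm c w k‖ ≤ B * (‖w₀‖ + 1) * (k : ℝ) ^ (-(w₀.re / 2) - 1) := by
    intro k w hw
    have hB0 : 0 ≤ B := (norm_nonneg _).trans (hB 0)
    refine (norm_abelTerm_le hB k (by linarith) hw.1.le).trans ?_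
    gcongr
    exact hw.2.le
  have hsum := (Real.summable_nat_rpow (p := -(w₀.re / 2) - 1)).2 (by linarith) |>.mul_left
    (B * (‖w₀‖ + 1))
  exact ((differentiableOn_tsum_of_summable_norm hsum hdiff hV hle).differentiableAt
    (hV.mem_nhds hw₀V)).differentiableWithinAt

theorem tendsto_sum_Icc_mul_cpow_neg (hB : ∀ n, ‖∑ k ∈ Icc 1 n, c k‖ ≤ B) {w : ℂ}
    (hw : 0 < w.re) :
    Tendsto (fun n => ∑ k ∈ Icc 1 n, c k * (k : ℂ) ^ (-w)) atTop
      (𝓝 (-∑' k, abelTerm c w k)) := by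
  have hsum : Summable (abelTerm c w) :=
    .of_norm_bounded ((Real.summable_nat_rpow.2 (by linarith)).mul_left (B * ‖w‖))
      fun k => norm_abelTerm_le hB k hw.le le_rfl
  have hboundary : Tendsto (fun n : ℕ => (∑ k ∈ Icc 1 n, c k) * (n : ℂ) ^ (-w)) atTop (𝓝 0) := by
    refine squeeze_zero_norm' (a := fun n : ℕ => B * (n : ℝ) ^ (-w.re)) ?_ ?_
    · filter_upwards [eventually_gt_atTop 0] with n hn
      rw [norm_mul, norm_natCast_cpow_of_pos hn, neg_re]
      exact mul_le_mul_of_nonneg_right (hB n) (by positivity)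
    · simpa using ((tendsto_rpow_neg_atTop hw).comp tendsto_natCast_atTop_atTop).const_mul B
  have hparts : ∀ n, ∑ k ∈ Icc 1 n, c k * (k : ℂ) ^ (-w) =
      (∑ k ∈ Icc 1 n, c k) * (n : ℂ) ^ (-w) - ∑ k ∈ range n, abelTerm c w k :=
    sum_Icc_one_mul_eq_sub_sum_range c (fun k => (k : ℂ) ^ (-w))
  simp_rw [hparts]
  simpa using hboundary.sub hsum.hasSum.tendsto_sum_nat

end AbelSummation

noncomputable def dirichletPartialSum (a : ℕ → ℂ) (s : ℂ) (n : ℕ) : ℂ :=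
  ∑ k ∈ Icc 1 n, a k / (k : ℂ) ^ s

theorem dirichletPartialSum_eq_sum_mul_cpow_neg (a : ℕ → ℂ) (s₀ s : ℂ) (n : ℕ) :
    dirichletPartialSum a s n =
      ∑ k ∈ Icc 1 n, a k / (k : ℂ) ^ s₀ * (k : ℂ) ^ (-(s - s₀)) := by
  refine sum_congr rfl fun k hk => ?_
  have hk0 : (k : ℂ) ≠ 0 := Nat.cast_ne_zero.2 (by grind)
  have hks₀ : (k : ℂ) ^ s₀ ≠ 0 := cpow_ne_zero_iff.2 (Or.inl hk0)
  rw [cpow_neg, cpow_sub _ _ hk0, inv_div, div_mul_div_cancel₀ hks₀]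

theorem exists_differentiableOn_tendsto_dirichletPartialSum {a : ℕ → ℂ} {s₀ : ℂ}
    (hbdd : Bornology.IsBounded (Set.range (dirichletPartialSum a s₀))) :
    ∃ F : ℂ → ℂ, DifferentiableOn ℂ F {s | s₀.re < s.re} ∧
      ∀ s, s₀.re < s.re → Tendsto (dirichletPartialSum a s) atTop (𝓝 (F s)) := by
  obtain ⟨B, hB⟩ := isBounded_iff_forall_norm_le.1 hbdd
  set c : ℕ → ℂ := fun k => a k / (k : ℂ) ^ s₀
  have hc : ∀ n, ‖∑ k ∈ Icc 1 n, c k‖ ≤ B := fun n => hB _ ⟨n, rfl⟩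
  refine ⟨fun s => -∑' k, abelTerm c (s - s₀) k, ?_, fun s hs => ?_⟩
  · exact (differentiableOn_tsum_abelTerm hc).neg.comp (differentiableOn_id.sub_const s₀)
      fun s (hs : s₀.re < s.re) => by simpa using hs
  · refine (tendsto_sum_Icc_mul_cpow_neg hc (by simpa using hs)).congr fun n => ?_
    exact (dirichletPartialSum_eq_sum_mul_cpow_neg a s₀ s n).symm

theorem differentiableOn_limUnder_dirichletPartialSum {a : ℕ → ℂ} {σ : ℝ}
    (h : ∀ s : ℂ, σ < s.re → ∃ L, Tendsto (dirichletPartialSum a s) atTop (𝓝 L)) :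
    DifferentiableOn ℂ (fun s => limUnder atTop (dirichletPartialSum a s)) {s | σ < s.re} := by
  intro s (hs : σ < s.re)
  set s₀ : ℂ := (((σ + s.re) / 2 : ℝ) : ℂ)
  have hs₀ : s₀.re = (σ + s.re) / 2 := ofReal_re _
  obtain ⟨L, hL⟩ := h s₀ (by rw [hs₀]; linarith)
  obtain ⟨F, hF, hlim⟩ :=
    exists_differentiableOn_tendsto_dirichletPartialSum (Metric.isBounded_range_of_tendsto _ hL)
  have hopen : IsOpen {t : ℂ | s₀.re < t.re} := isOpen_lt continuous_const continuous_re
  have hmem : {t : ℂ | s₀.re < t.re} ∈ 𝓝 s := hopen.mem_nhds (show s₀.re < s.re by linarith)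
  refine ((hF.differentiableAt hmem).congr_of_eventuallyEq ?_).differentiableWithinAt
  filter_upwards [hmem] with t ht using (hlim t ht).limUnder_eq

theorem LSeriesHasSum.tendsto_dirichletPartialSum {a : ℕ → ℂ} {s L : ℂ}
    (h : LSeriesHasSum a s L) : Tendsto (dirichletPartialSum a s) atTop (𝓝 L) := by
  have hsum : ∀ n, ∑ k ∈ range (n + 1), LSeries.term a s k = dirichletPartialSum a s n := by
    intro n
    rw [range_eq_Ico, sum_eq_sum_Ico_succ_bot n.succ_pos, LSeries.term_zero]
    simp only [zero_add, Nat.succ_eq_add_one, Ico_add_one_right_eq_Icc]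
    exact sum_congr rfl fun k hk => LSeries.term_of_ne_zero (by grind) a s
  exact (h.tendsto_sum_nat.comp (tendsto_add_atTop_nat 1)).congr hsum

theorem mul_riemannZeta_eq_one_of_differentiableOn {F : ℂ → ℂ} {σ : ℝ}
    (hF : DifferentiableOn ℂ F {s | σ < s.re})
    (h : ∀ s : ℂ, 1 < s.re → F s * riemannZeta s = 1) {s : ℂ} (hs : σ < s.re) (hs1 : s ≠ 1) :
    F s * riemannZeta s = 1 := by
  -- `riemannZeta₁` is the entire extension of `(s - 1) * riemannZeta s`.
  have hiff : ∀ t, t ≠ 1 → (F t * riemannZeta t = 1 ↔ F t * riemannZeta₁ t = t - 1) :=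
    fun t ht => by
      rw [riemannZeta_eq_inv_sub_mul ht, mul_left_comm, inv_mul_eq_one₀ (sub_ne_zero.2 ht), eq_comm]
  have hU : IsOpen {s : ℂ | σ < s.re} := isOpen_lt continuous_const continuous_re
  have hV : IsOpen {s : ℂ | 1 < s.re} := isOpen_lt continuous_const continuous_re
  set z₀ : ℂ := ((max σ 1 + 1 : ℝ) : ℂ)
  have hz₀ : 1 < z₀.re ∧ σ < z₀.re := by
    simp only [z₀, ofReal_re]
    constructor <;> linarith [le_max_left σ 1, le_max_right σ 1]
  have hid : Set.EqOn (fun t => F t * riemannZeta₁ t) (fun t => t - 1) {s : ℂ | σ < s.re} := by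
    refine AnalyticOnNhd.eqOn_of_preconnected_of_eventuallyEq
      ((hF.mul differentiable_riemannZeta₁.differentiableOn).analyticOnNhd hU)
      ((differentiableOn_id.sub_const 1).analyticOnNhd hU)
      (convex_halfSpace_re_gt σ).isPreconnected hz₀.2 ?_
    filter_upwards [hV.mem_nhds hz₀.1] with t (ht : 1 < t.re)
    exact (hiff t (by rintro rfl; simp at ht)).1 (h t ht)
  exact (hiff s hs1).2 (hid hs)

theorem stmt17
    (h : ∀ s : ℂ, 1/2 < s.re → ∃ L : ℂ, Tendsto (fun n : ℕ =>
      ∑ k ∈ Finset.Icc 1 n, (ArithmeticFunction.moebius k : ℂ) / (k:ℂ)^s) atTop (nhds L)) :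
    ∀ s : ℂ, 1/2 < s.re → riemannZeta s ≠ 0 := by
  set F := fun s =>
    limUnder atTop (dirichletPartialSum (fun k => (ArithmeticFunction.moebius k : ℂ)) s)
  have hF : DifferentiableOn ℂ F {s | 1/2 < s.re} := differentiableOn_limUnder_dirichletPartialSum h
  have hF_inv : ∀ s : ℂ, 1 < s.re → F s * riemannZeta s = 1 := fun s hs => by
    have hL := (ArithmeticFunction.LSeriesSummable_moebius_iff.2 hs).LSeriesHasSum
    rw [show F s = _ from hL.tendsto_dirichletPartialSum.limUnder_eq,
      ← ArithmeticFunction.LSeries_zeta_eq_riemannZeta hs, mul_comm]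
    exact ArithmeticFunction.LSeries_zeta_mul_Lseries_moebius hs
  intro s hs hζ
  rcases eq_or_ne s 1 with rfl | hs1
  · exact riemannZeta_ne_zero_of_one_le_re (by simp) hζ
  · simpa [hζ] using mul_riemannZeta_eq_one_of_differentiableOn hF hF_inv hs hs1
end
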